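/- For any sequence (n_i)_{i∈ℤ} ⊂ ℤ ∪ {-∞} for which there is an integer k with n_i = -∞ for all i > k, the map ‖Σ_{i≫-∞} x_i t^i‖ = max_{i≤k} |x_i| q^{n_i} is a seminorm on the K-vector space K((t)), equal to the gauge seminorm of the lattice Σ_{i∈ℤ} 𝔭^{n_i} t^i; moreover the higher topology on K((t)) is exactly the locally convex topology defined by the family of all such seminorms. -/

import Mathlib

/-!
Common setting: `K` is a characteristic-zero local field (a finite extension of `ℚ_p`)
with ring of integers `𝒪 = {c : K | ‖c‖ ≤ 1}`, maximal ideal `𝔭 = {c : K | ‖c‖ < 1}`,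
residue field of cardinality `q` and the absolute value normalised by `‖π‖ = q⁻¹`.
We formalise the two-dimensional local fields `K((t))` (as `LaurentSeries K`) and
`K{{t}}` (as the submodule `mixedCarrier K` of `ℤ → K`), their higher topologies, and
the relevant functional-analytic notions (lattices, seminorms, boundedness,
c-compactness, compactoidness, completeness for nets, duality).
-/

open Filter Topology Set Pointwise
open scoped Classical

noncomputable section

namespace TwoDimLF

variable (K : Type) [NontriviallyNormedField K]

/-- `K` is a characteristic-zero nonarchimedean local field: the norm is nonarchimedean,
takes the values `q^ℤ` on `K˟` (with a uniformizer of norm `q⁻¹`), `K` is complete, locally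
compact, of characteristic zero, and the residue field has exactly `q` elements. -/
structure IsCharZeroLocalField (q : ℕ) : Prop where
  nonarch : ∀ x y : K, ‖x + y‖ ≤ max ‖x‖ ‖y‖
  one_lt_q : 1 < q
  norm_values : ∀ x : K, x ≠ 0 → ∃ n : ℤ, ‖x‖ = (q : ℝ) ^ (-n)
  exists_uniformizer : ∃ π : K, ‖π‖ = ((q : ℝ))⁻¹
  charZero : CharZero K
  locallyCompact : LocallyCompactSpace K
  complete : CompleteSpace K
  residue_card : ∃ s : Finset K, s.card = q ∧
    ∀ x : K, ‖x‖ ≤ 1 → ∃! y, y ∈ s ∧ ‖x - y‖ < 1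

/-- The fractional ideal `𝔭^n ⊆ K` for `n ∈ ℤ ∪ {-∞}`, with the convention `𝔭^(-∞) = K`. -/
def pB (q : ℕ) (n : WithBot ℤ) : Set K :=
  WithBot.recBotCoe Set.univ (fun m : ℤ => {x : K | ‖x‖ ≤ (q : ℝ) ^ (-m)}) n

/-- The fractional ideal `𝔭^n ⊆ K` for `n ∈ ℤ ∪ {∞}`, with the convention `𝔭^∞ = {0}`. -/
def pT (q : ℕ) (n : WithTop ℤ) : Set K :=
  WithTop.recTopCoe {0} (fun m : ℤ => {x : K | ‖x‖ ≤ (q : ℝ) ^ (-m)}) n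

/-- The fractional ideal `𝔭^n ⊆ K` for `n ∈ ℤ ∪ {±∞}`. -/
def pE (q : ℕ) (n : WithBot (WithTop ℤ)) : Set K :=
  WithBot.recBotCoe Set.univ (fun m : WithTop ℤ => pT K q m) n

/-- `q ^ n ∈ ℝ` for `n ∈ ℤ ∪ {-∞}`, with the convention `q^(-∞) = 0`. -/
def qpow (q : ℕ) (n : WithBot ℤ) : ℝ :=
  WithBot.recBotCoe 0 (fun m : ℤ => (q : ℝ) ^ m) n

/-- `1 - k` for `k ∈ ℤ ∪ {±∞}` (so `1 - (±∞) = ∓∞`). -/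
def oneSubE : WithBot (WithTop ℤ) → WithBot (WithTop ℤ) :=
  WithBot.recBotCoe ((⊤ : WithTop ℤ) : WithBot (WithTop ℤ))
    (WithTop.recTopCoe (⊥ : WithBot (WithTop ℤ))
      (fun z : ℤ => (((1 - z : ℤ) : WithTop ℤ) : WithBot (WithTop ℤ))))

section LCS

variable {V : Type} [AddCommGroup V] [Module K V]

/-- `S` is an `𝒪`-submodule of the `K`-vector space `V`, where `𝒪 = {c : K | ‖c‖ ≤ 1}`
is the ring of integers of `K`. -/
def IsOSubmodule (S : Set V) : Prop :=
  (0 : V) ∈ S ∧ (∀ x ∈ S, ∀ y ∈ S, x + y ∈ S) ∧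
    ∀ c : K, ‖c‖ ≤ 1 → ∀ x ∈ S, c • x ∈ S

/-- `S` is an `𝒪`-lattice in `V`: an `𝒪`-submodule such that every vector is carried
into `S` by some nonzero scalar. -/
def IsLatticeSet (S : Set V) : Prop :=
  IsOSubmodule K S ∧ ∀ v : V, ∃ a : K, a ≠ 0 ∧ a • v ∈ S

/-- A (nonarchimedean) seminorm on the `K`-vector space `V`. -/
def IsSeminorm (N : V → ℝ) : Prop :=
  (∀ (c : K) (v : V), N (c • v) = ‖c‖ * N v) ∧ ∀ v w : V, N (v + w) ≤ max (N v) (N w)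

/-- The gauge seminorm of a lattice `Λ ⊆ V`: `‖v‖_Λ = inf {‖a‖ : v ∈ aΛ}`. -/
def gaugeSeminorm (Λ : Set V) (v : V) : ℝ :=
  sInf {r : ℝ | ∃ a : K, v ∈ a • Λ ∧ r = ‖a‖}

/-- The group topology on `W` determined by a family `B` of neighbourhoods of zero:
neighbourhoods of `x` are generated by the translates `x + U`, `U ∈ B`. -/
def addTopologyOf {W : Type} [AddCommGroup W] (B : Set (Set W)) : TopologicalSpace W :=
  TopologicalSpace.mkOfNhds fun x => Filter.map (fun v => x + v) (⨅ U ∈ B, Filter.principal U)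

/-- `B` is (Von-Neumann) bounded for the locally convex topology `τ`: every open lattice
absorbs it. -/
def IsVNBounded (τ : TopologicalSpace V) (B : Set V) : Prop :=
  ∀ Λ : Set V, IsLatticeSet K Λ → IsOpen[τ] Λ → ∃ a : K, B ⊆ a • Λ

/-- The `𝒪`-submodule `A ⊆ V` is c-compact: for every decreasing filtered family of open
lattices `L i`, the canonical map `A → lim A/(L i ∩ A)` is surjective (phrased via
compatible families of representatives). -/
def IsCCompact (τ : TopologicalSpace V) (A : Set V) : Prop :=
  ∀ (ι : Type) (L : ι → Set V),
    (∀ i, IsLatticeSet K (L i) ∧ IsOpen[τ] (L i)) →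
    (∀ i j, ∃ k, L k ⊆ L i ∧ L k ⊆ L j) →
    ∀ x : ι → V, (∀ i, x i ∈ A) →
      (∀ i j, L j ⊆ L i → x j - x i ∈ L i) →
      ∃ a ∈ A, ∀ i, a - x i ∈ L i

/-- The `𝒪`-submodule `A ⊆ V` is compactoid: for every open lattice `Λ` there are finitely
many vectors `v₁, …, v_m ∈ V` with `A ⊆ Λ + 𝒪v₁ + ⋯ + 𝒪v_m`. -/
def IsCompactoid (τ : TopologicalSpace V) (A : Set V) : Prop :=
  ∀ Λ : Set V, IsLatticeSet K Λ → IsOpen[τ] Λ →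
    ∃ (m : ℕ) (v : Fin m → V),
      A ⊆ {u : V | ∃ l ∈ Λ, ∃ c : Fin m → K, (∀ j, ‖c j‖ ≤ 1) ∧ u = l + ∑ j, c j • v j}

/-- `A ⊆ V` is complete: every Cauchy net with values in `A` converges to a point of `A`
(for the topology `τ`). -/
def IsNetComplete (τ : TopologicalSpace V) (A : Set V) : Prop :=
  ∀ (ι : Type) [Preorder ι] [Nonempty ι],
    (∀ i j : ι, ∃ k, i ≤ k ∧ j ≤ k) →
    ∀ x : ι → V, (∀ i, x i ∈ A) →
      (∀ U ∈ @nhds V τ 0, ∃ i0, ∀ j ≥ i0, ∀ k ≥ i0, x j - x k ∈ U) →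
      ∃ a ∈ A, Filter.Tendsto x Filter.atTop (@nhds V τ a)

/-- `τ` makes `V` a locally convex topological `K`-vector space: it is a vector-space
topology whose filter of neighbourhoods of zero admits a basis of lattices. -/
def IsLCTVS (τ : TopologicalSpace V) : Prop :=
  @IsTopologicalAddGroup V τ _ ∧ @ContinuousSMul K V _ _ τ ∧
    ∀ S ∈ @nhds V τ 0, ∃ Λ : Set V, IsLatticeSet K Λ ∧ Λ ∈ @nhds V τ 0 ∧ Λ ⊆ S

/-- The topological dual of `(V, τ)`: continuous `K`-linear forms, as a set of functions. -/
def dualSet (τ : TopologicalSpace V) : Set (V → K) :=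
  {l | IsLinearMap K l ∧ @Continuous V K τ _ l}

/-- Basic neighbourhoods of zero for the `c`-topology on `V → K`: uniform convergence on
compactoid `𝒪`-submodules. -/
def cTopBasic (τ : TopologicalSpace V) : Set (Set (V → K)) :=
  {S | ∃ (B : Set V) (ε : ℝ), IsOSubmodule K B ∧ IsCompactoid K τ B ∧ 0 < ε ∧
    S = {l : V → K | ∀ x ∈ B, ‖l x‖ ≤ ε}}

/-- The `c`-topology (uniform convergence on compactoid `𝒪`-submodules) on `V → K`. -/
def cTop (τ : TopologicalSpace V) : TopologicalSpace (V → K) :=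
  addTopologyOf (cTopBasic K τ)

/-- The pseudo-polar `A^p = {l ∈ V' : |l(v)| < 1 for all v ∈ A}`. -/
def pseudoPolar (τ : TopologicalSpace V) (A : Set V) : Set (V → K) :=
  {l | l ∈ dualSet K τ ∧ ∀ v ∈ A, ‖l v‖ < 1}

/-- The pseudo-bipolar `A^{pp} = {v ∈ V : |l(v)| < 1 for all l ∈ A^p}`. -/
def pseudoBipolar (τ : TopologicalSpace V) (A : Set V) : Set V :=
  {v | ∀ l ∈ pseudoPolar K τ A, ‖l v‖ < 1}

end LCS

/-! ### The equal characteristic field `K((t))` -/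

/-- Basic neighbourhoods of zero for the higher topology on `K((t))`:
`Σ U_i t^i` where each `U_i` is an open neighbourhood of `0` in `K` and `U_i = K` for all
sufficiently large `i`. -/
def laurentBasic : Set (Set (LaurentSeries K)) :=
  {S | ∃ U : ℤ → Set K, (∀ i, IsOpen (U i) ∧ (0 : K) ∈ U i) ∧
    (∃ N : ℤ, ∀ i, N ≤ i → U i = Set.univ) ∧
    S = {f : LaurentSeries K | ∀ i, f.coeff i ∈ U i}}

/-- The higher topology on `K((t))`. -/
def laurentTop : TopologicalSpace (LaurentSeries K) := addTopologyOf (laurentBasic K)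

/-- `Λ = Σ_{i∈ℤ} 𝔭^{n_i} t^i ⊆ K((t))` for a sequence `(n_i) ⊆ ℤ ∪ {-∞}`. -/
def laurentLambda (q : ℕ) (n : ℤ → WithBot ℤ) : Set (LaurentSeries K) :=
  {f | ∀ i, f.coeff i ∈ pB K q (n i)}

/-- `B = Σ_{i∈ℤ} 𝔭^{k_i} t^i ⊆ K((t))` for a sequence `(k_i) ⊆ ℤ ∪ {∞}`. -/
def laurentPT (q : ℕ) (k : ℤ → WithTop ℤ) : Set (LaurentSeries K) :=
  {f | ∀ i, f.coeff i ∈ pT K q (k i)}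

/-- `A = Σ_{i∈ℤ} 𝔭^{k_i} t^i ⊆ K((t))` for a sequence `(k_i) ⊆ ℤ ∪ {±∞}`. -/
def laurentPE (q : ℕ) (k : ℤ → WithBot (WithTop ℤ)) : Set (LaurentSeries K) :=
  {f | ∀ i, f.coeff i ∈ pE K q (k i)}

/-- The admissible seminorm `‖Σ x_i t^i‖ = max_i ‖x_i‖ q^{n_i}` on `K((t))`. -/
def laurentSeminorm (q : ℕ) (n : ℤ → WithBot ℤ) (f : LaurentSeries K) : ℝ :=
  sSup {r : ℝ | ∃ i : ℤ, r = ‖f.coeff i‖ * qpow q (n i)}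

/-- The ring of integers `K[[t]] ⊆ K((t))`. -/
def laurentIntegers : Set (LaurentSeries K) := {f | ∀ i, i < 0 → f.coeff i = 0}

/-- The rank-two ring of integers `𝒪 + tK[[t]] ⊆ K((t))`. -/
def laurentRankTwo : Set (LaurentSeries K) :=
  {f | (∀ i, i < 0 → f.coeff i = 0) ∧ ‖f.coeff 0‖ ≤ 1}

/-- The pairing `γ(x)(y) = π₀(xy) = Σ_i x_i y_{-i}` on `K((t))`. -/
def laurentPairing (x y : LaurentSeries K) : K := ∑' i : ℤ, x.coeff i * y.coeff (-i)

/-! ### The mixed characteristic field `K{{t}}` -/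

/-- The underlying `K`-vector space of `K{{t}}`: functions `x : ℤ → K` (coefficients of
`Σ x_i t^i`) with `inf_i v_K(x_i) > -∞` (i.e. bounded norms) and `x_i → 0` as `i → -∞`. -/
def mixedCarrier : Submodule K (ℤ → K) where
  carrier := {x | (∃ C : ℝ, ∀ i, ‖x i‖ ≤ C) ∧ Filter.Tendsto x Filter.atBot (nhds (0 : K))}
  zero_mem' := ⟨⟨0, fun i => by simp⟩, tendsto_const_nhds⟩
  add_mem' := by
    rintro x y ⟨⟨C, hC⟩, hx⟩ ⟨⟨D, hD⟩, hy⟩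
    refine ⟨⟨C + D, fun i => (norm_add_le _ _).trans (add_le_add (hC i) (hD i))⟩, ?_⟩
    have h : Filter.Tendsto (x + y) Filter.atBot (nhds ((0 : K) + 0)) := hx.add hy
    rwa [add_zero] at h
  smul_mem' := by
    rintro c x ⟨⟨C, hC⟩, hx⟩
    refine ⟨⟨‖c‖ * C, fun i => ?_⟩, ?_⟩
    · have h : ‖(c • x) i‖ = ‖c‖ * ‖x i‖ := by simp [norm_smul]
      rw [h]
      exact mul_le_mul_of_nonneg_left (hC i) (norm_nonneg c)
    · have h : Filter.Tendsto (c • x) Filter.atBot (nhds (c • (0 : K))) := hx.const_smul c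
      rwa [smul_zero] at h

/-- The field `K{{t}}`, as a `K`-vector space. -/
abbrev Mt := ↥(mixedCarrier K)

/-- Basic neighbourhoods of zero for the higher topology on `K{{t}}`:
`Σ V_i t^i` where each `V_i` is an open neighbourhood of `0` in `K`, some `𝔭^c` is
contained in every `V_i`, and for every `l` eventually `𝔭^l ⊆ V_i`. -/
def mixedBasic (q : ℕ) : Set (Set (Mt K)) :=
  {S | ∃ Vs : ℤ → Set K, (∀ i, IsOpen (Vs i) ∧ (0 : K) ∈ Vs i) ∧
    (∃ c : ℤ, ∀ i, {x : K | ‖x‖ ≤ (q : ℝ) ^ (-c)} ⊆ Vs i) ∧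
    (∀ l : ℤ, ∃ i0 : ℤ, ∀ i, i0 ≤ i → {x : K | ‖x‖ ≤ (q : ℝ) ^ (-l)} ⊆ Vs i) ∧
    S = {f : Mt K | ∀ i, f.1 i ∈ Vs i}}

/-- The higher topology on `K{{t}}`. -/
def mixedTop (q : ℕ) : TopologicalSpace (Mt K) := addTopologyOf (mixedBasic K q)

/-- `Λ = Σ_{i∈ℤ} 𝔭^{n_i} t^i ⊆ K{{t}}` for a sequence `(n_i) ⊆ ℤ ∪ {-∞}`. -/
def mixedLambda (q : ℕ) (n : ℤ → WithBot ℤ) : Set (Mt K) :=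
  {f | ∀ i, f.1 i ∈ pB K q (n i)}

/-- `B = Σ_{i∈ℤ} 𝔭^{k_i} t^i ⊆ K{{t}}` for a sequence `(k_i) ⊆ ℤ ∪ {∞}`. -/
def mixedPT (q : ℕ) (k : ℤ → WithTop ℤ) : Set (Mt K) :=
  {f | ∀ i, f.1 i ∈ pT K q (k i)}

/-- `A = Σ_{i∈ℤ} 𝔭^{k_i} t^i ⊆ K{{t}}` for a sequence `(k_i) ⊆ ℤ ∪ {±∞}`. -/
def mixedPE (q : ℕ) (k : ℤ → WithBot (WithTop ℤ)) : Set (Mt K) :=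
  {f | ∀ i, f.1 i ∈ pE K q (k i)}

/-- The admissible seminorm `‖Σ x_i t^i‖ = sup_i ‖x_i‖ q^{n_i}` on `K{{t}}`. -/
def mixedSeminorm (q : ℕ) (n : ℤ → WithBot ℤ) (f : Mt K) : ℝ :=
  sSup {r : ℝ | ∃ i : ℤ, r = ‖f.1 i‖ * qpow q (n i)}

/-- The ring of integers `𝒪{{t}} ⊆ K{{t}}`. -/
def mixedIntegers : Set (Mt K) := {f | ∀ i, ‖f.1 i‖ ≤ 1}

/-- The rank-two ring of integers `Σ_{i<0} 𝔭 t^i + Σ_{i≥0} 𝒪 t^i ⊆ K{{t}}`. -/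
def mixedRankTwo (q : ℕ) : Set (Mt K) :=
  {f | (∀ i : ℤ, i < 0 → ‖f.1 i‖ ≤ ((q : ℝ))⁻¹) ∧ ∀ i : ℤ, 0 ≤ i → ‖f.1 i‖ ≤ 1}

/-- The monomial `t^i ∈ K{{t}}`. -/
def mixedT (i : ℤ) : Mt K :=
  ⟨fun j => if j = i then 1 else 0,
    ⟨⟨1, fun j => by by_cases h : j = i <;> simp [h]⟩, by
      refine (tendsto_const_nhds : Filter.Tendsto (fun _ : ℤ => (0 : K))
        Filter.atBot (nhds 0)).congr' ?_
      filter_upwards [Filter.eventually_le_atBot (i - 1)] with j hj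
      have h : j ≠ i := by omega
      simp [h]⟩⟩

/-- Coefficients of the product of two elements of `K{{t}}` (Cauchy product). -/
def mixedMulCoeff (x y : Mt K) : ℤ → K := fun k => ∑' i : ℤ, x.1 i * y.1 (k - i)

/-- Multiplication on `K{{t}}`. -/
def mixedMul (x y : Mt K) : Mt K :=
  if h : mixedMulCoeff K x y ∈ mixedCarrier K then ⟨_, h⟩ else 0

/-- The pairing `γ(x)(y) = π₀(xy) = Σ_i x_i y_{-i}` on `K{{t}}`. -/
def mixedPairing (x y : Mt K) : K := ∑' i : ℤ, x.1 i * y.1 (-i)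


/-!
Since a Laurent series has only finitely many nonzero coefficients of index `≤ k`, the
supremum `max_{i ≤ k} |x_i| q^{n_i}` is attained; the seminorm axioms follow termwise from the
ultrametric inequality. The attained value `|x_i| q^{n_i}` is itself an absolute value of `K`
(use a power of a uniformizer), and `f ∈ aΛ ↔ ‖f‖ ≤ |a|` for `a ≠ 0`, so the gauge infimum is
attained at this maximum (or, when it is `0`, approached by `|a| → 0`). For the topology: the
closed unit ball of such a seminorm is a basic open set, and every basic open set `Σ U_i t^i`
contains a ball `Σ 𝔭^{n_i} t^i`, choosing `𝔭^{n_i} ⊆ U_i` for the finitely many relevant `i`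
and `n_i = -∞` where `U_i = K`.
-/

variable {K}

section AddTopology

variable {W : Type} [AddCommGroup W] {B : Set (Set W)}

lemma hasBasis_nhds_zero_addTopologyOf (hB : B.Nonempty)
    (hinter : ∀ U ∈ B, ∀ V ∈ B, U ∩ V ∈ B) (hzero : ∀ U ∈ B, (0 : W) ∈ U)
    (hadd : ∀ U ∈ B, ∃ V ∈ B, V + V ⊆ U) :
    (@nhds W (addTopologyOf B) 0).HasBasis (· ∈ B) id := by
  have hF : (⨅ U ∈ B, 𝓟 U).HasBasis (· ∈ B) id :=
    hasBasis_biInf_principal (fun U hU V hV => ⟨U ∩ V, hinter U hU V hV,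
      inter_subset_left, inter_subset_right⟩) hB
  have hnhds := TopologicalSpace.nhds_mkOfNhds_of_hasBasis (fun x => hF.map (x + ·))
    (fun x U hU => ⟨0, hzero U hU, add_zero x⟩) ?_ 0
  · rw [addTopologyOf, hnhds]
    simpa only [zero_add, map_id'] using hF
  intro x U hU
  obtain ⟨V, hV, hVU⟩ := hadd U hU
  refine (hF.map (x + ·)).eventually_iff.2 ⟨V, hV, ?_⟩
  rintro _ ⟨v, hv, rfl⟩
  refine (hF.map _).mem_iff.2 ⟨V, hV, ?_⟩
  rintro _ ⟨w, hw, rfl⟩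
  exact ⟨v + w, hVU (add_mem_add hv hw), (add_assoc x v w).symm⟩

end AddTopology

section Exponents

variable {q : ℕ}

@[simp] lemma qpow_bot : qpow q ⊥ = 0 := rfl

@[simp] lemma qpow_coe (m : ℤ) : qpow q m = (q : ℝ) ^ m := rfl

lemma qpow_nonneg (n : WithBot ℤ) : 0 ≤ qpow q n := by
  induction n using WithBot.recBotCoe with
  | bot => exact le_rfl
  | coe m => exact zpow_nonneg (Nat.cast_nonneg q) m

lemma mem_pB_iff (hq : 0 < q) {n : WithBot ℤ} {x : K} :
    x ∈ pB K q n ↔ ‖x‖ * qpow q n ≤ 1 := by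
  induction n using WithBot.recBotCoe with
  | bot => simp [pB]
  | coe m =>
    have hqm : (0 : ℝ) < (q : ℝ) ^ m := zpow_pos (Nat.cast_pos.2 hq) m
    simp only [pB, WithBot.recBotCoe_coe, mem_ofPred_eq, qpow_coe, zpow_neg]
    rw [← le_div_iff₀ hqm, one_div]

lemma isOpen_setOf_norm_mul_le [IsUltrametricDist K] {c ε : ℝ} (hc : 0 ≤ c) (hε : 0 < ε) :
    IsOpen {x : K | ‖x‖ * c ≤ ε} := by
  rcases hc.eq_or_lt with rfl | hc
  · simp [hε.le]
  · convert IsUltrametricDist.isOpen_closedBall (0 : K) (div_pos hε hc).ne' using 1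
    ext x
    simp [le_div_iff₀ hc]

lemma exists_setOf_norm_mul_zpow_le_subset (hq : 1 < q) {U : Set K} (hU : U ∈ 𝓝 0) :
    ∃ m : ℤ, {x : K | ‖x‖ * (q : ℝ) ^ m ≤ 1} ⊆ U := by
  obtain ⟨δ, hδ, hball⟩ := Metric.mem_nhds_iff.1 hU
  have hq' : (1 : ℝ) < q := Nat.one_lt_cast.2 hq
  obtain ⟨m, hm⟩ := exists_pow_lt_of_lt_one hδ (inv_lt_one_of_one_lt₀ hq')
  refine ⟨m, fun x hx => hball (mem_ball_zero_iff.2 ?_)⟩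
  have hqm : (0 : ℝ) < (q : ℝ) ^ (m : ℤ) := by positivity
  calc ‖x‖ ≤ 1 / (q : ℝ) ^ (m : ℤ) := (le_div_iff₀ hqm).2 hx
    _ = (q : ℝ)⁻¹ ^ m := by rw [one_div, zpow_natCast, inv_pow]
    _ < δ := hm

end Exponents

section Seminorm

variable {q : ℕ} {n : ℤ → WithBot ℤ} {k : ℤ}

lemma laurentSeminorm_eq_sSup_range (f : LaurentSeries K) :
    laurentSeminorm K q n f = sSup (range fun i => ‖f.coeff i‖ * qpow q (n i)) := by
  simp only [laurentSeminorm, range, eq_comm]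

lemma finite_range_laurentTerm (hk : ∀ i, k < i → n i = ⊥) (f : LaurentSeries K) :
    (range fun i => ‖f.coeff i‖ * qpow q (n i)).Finite := by
  refine (((finite_Icc f.order k).image fun i => ‖f.coeff i‖ * qpow q (n i)).insert 0).subset ?_
  rintro _ ⟨i, rfl⟩
  by_cases hi : i ∈ Icc f.order k
  · exact Or.inr ⟨i, hi, rfl⟩
  · left
    rcases not_and_or.1 hi with hlt | hgt
    · simp [HahnSeries.coeff_eq_zero_of_lt_order (not_le.1 hlt)]
    · simp [hk i (not_le.1 hgt)]

lemma laurentSeminorm_le_iff (hk : ∀ i, k < i → n i = ⊥) {f : LaurentSeries K} {c : ℝ} :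
    laurentSeminorm K q n f ≤ c ↔ ∀ i, ‖f.coeff i‖ * qpow q (n i) ≤ c := by
  rw [laurentSeminorm_eq_sSup_range, csSup_le_iff (finite_range_laurentTerm hk f).bddAbove
    (range_nonempty fun i => ‖f.coeff i‖ * qpow q (n i)), forall_mem_range]

lemma le_laurentSeminorm (hk : ∀ i, k < i → n i = ⊥) (f : LaurentSeries K) (i : ℤ) :
    ‖f.coeff i‖ * qpow q (n i) ≤ laurentSeminorm K q n f :=
  (laurentSeminorm_le_iff hk).1 le_rfl i

lemma exists_eq_laurentSeminorm (hk : ∀ i, k < i → n i = ⊥) (f : LaurentSeries K) :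
    ∃ i, ‖f.coeff i‖ * qpow q (n i) = laurentSeminorm K q n f := by
  rw [laurentSeminorm_eq_sSup_range]
  exact (range_nonempty _).csSup_mem (finite_range_laurentTerm hk f)

lemma laurentSeminorm_smul (hk : ∀ i, k < i → n i = ⊥) (c : K) (f : LaurentSeries K) :
    laurentSeminorm K q n (c • f) = ‖c‖ * laurentSeminorm K q n f := by
  have hterm : ∀ i, ‖(c • f).coeff i‖ * qpow q (n i) = ‖c‖ * (‖f.coeff i‖ * qpow q (n i)) :=
    fun i => by rw [HahnSeries.coeff_smul, smul_eq_mul, norm_mul, mul_assoc]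
  obtain ⟨i₀, hi₀⟩ := exists_eq_laurentSeminorm hk f
  refine le_antisymm ((laurentSeminorm_le_iff hk).2 fun i => ?_) ?_
  · rw [hterm]
    exact mul_le_mul_of_nonneg_left (le_laurentSeminorm hk f i) (norm_nonneg c)
  · rw [← hi₀, ← hterm]
    exact le_laurentSeminorm hk _ i₀

lemma laurentSeminorm_add_le [IsUltrametricDist K] (hk : ∀ i, k < i → n i = ⊥)
    (f g : LaurentSeries K) :
    laurentSeminorm K q n (f + g) ≤ max (laurentSeminorm K q n f) (laurentSeminorm K q n g) := by
  refine (laurentSeminorm_le_iff hk).2 fun i => ?_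
  calc ‖(f + g).coeff i‖ * qpow q (n i)
      ≤ max ‖f.coeff i‖ ‖g.coeff i‖ * qpow q (n i) := by
        rw [HahnSeries.coeff_add]
        exact mul_le_mul_of_nonneg_right (IsUltrametricDist.norm_add_le_max _ _) (qpow_nonneg _)
    _ = max (‖f.coeff i‖ * qpow q (n i)) (‖g.coeff i‖ * qpow q (n i)) :=
        max_mul_of_nonneg _ _ (qpow_nonneg _)
    _ ≤ _ := max_le_max (le_laurentSeminorm hk f i) (le_laurentSeminorm hk g i)

lemma mem_smul_laurentLambda_iff (hq : 0 < q) (hk : ∀ i, k < i → n i = ⊥)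
    {f : LaurentSeries K} {a : K} (ha : a ≠ 0) :
    f ∈ a • laurentLambda K q n ↔ laurentSeminorm K q n f ≤ ‖a‖ := by
  have hlambda : ∀ g : LaurentSeries K, g ∈ laurentLambda K q n ↔ laurentSeminorm K q n g ≤ 1 :=
    fun g => by rw [laurentSeminorm_le_iff hk]; exact forall_congr' fun i => mem_pB_iff hq
  rw [mem_smul_set_iff_inv_smul_mem₀ ha, hlambda, laurentSeminorm_smul hk, norm_inv,
    inv_mul_le_iff₀ (norm_pos_iff.2 ha), mul_one]

lemma exists_norm_eq_laurentSeminorm {π : K} (hπ : ‖π‖ = (q : ℝ)⁻¹)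
    (hk : ∀ i, k < i → n i = ⊥) (f : LaurentSeries K) :
    ∃ c : K, ‖c‖ = laurentSeminorm K q n f := by
  obtain ⟨i, hi⟩ := exists_eq_laurentSeminorm hk f
  rw [← hi]
  induction n i using WithBot.recBotCoe with
  | bot => exact ⟨0, by simp⟩
  | coe m => exact ⟨f.coeff i * π ^ (-m), by rw [norm_mul, norm_zpow, hπ, inv_zpow', neg_neg,
      qpow_coe]⟩

lemma laurentSeminorm_eq_gaugeSeminorm (hq : 0 < q) {π : K} (hπ : ‖π‖ = (q : ℝ)⁻¹)
    (hk : ∀ i, k < i → n i = ⊥) (f : LaurentSeries K) :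
    laurentSeminorm K q n f = gaugeSeminorm K (laurentLambda K q n) f := by
  set G := {r : ℝ | ∃ a : K, f ∈ a • laurentLambda K q n ∧ r = ‖a‖}
  have hG : ∀ a : K, a ≠ 0 → laurentSeminorm K q n f ≤ ‖a‖ → ‖a‖ ∈ G :=
    fun a ha h => ⟨a, (mem_smul_laurentLambda_iff hq hk ha).2 h, rfl⟩
  have hlower : laurentSeminorm K q n f ∈ lowerBounds G := by
    rintro _ ⟨a, hfa, rfl⟩
    rcases eq_or_ne a 0 with rfl | ha
    · obtain ⟨g, -, rfl⟩ := hfa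
      rw [laurentSeminorm_smul hk, norm_zero, zero_mul]
    · exact (mem_smul_laurentLambda_iff hq hk ha).1 hfa
  obtain ⟨c, hc⟩ := exists_norm_eq_laurentSeminorm hπ hk f
  rcases eq_or_ne c 0 with rfl | hc0
  · rw [norm_zero] at hc
    obtain ⟨a, ha, -⟩ := NormedField.exists_norm_lt K one_pos
    refine (IsGLB.csInf_eq ⟨hlower, fun b hb => ?_⟩ ⟨_, hG a (norm_pos_iff.1 ha) (hc ▸ ha.le)⟩).symm
    by_contra! hb0
    rw [← hc] at hb0
    obtain ⟨a', ha', hab⟩ := NormedField.exists_norm_lt K hb0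
    exact (hab.trans_le (hb (hG a' (norm_pos_iff.1 ha') (hc ▸ ha'.le)))).false
  · exact (IsLeast.csInf_eq ⟨hc ▸ hG c hc0 hc.ge, hlower⟩).symm

end Seminorm

section HigherTopology

lemma univ_mem_laurentBasic : (univ : Set (LaurentSeries K)) ∈ laurentBasic K :=
  ⟨fun _ => univ, fun _ => ⟨isOpen_univ, trivial⟩, ⟨0, fun _ _ => rfl⟩, by simp⟩

lemma inter_mem_laurentBasic {U V : Set (LaurentSeries K)} (hU : U ∈ laurentBasic K)
    (hV : V ∈ laurentBasic K) : U ∩ V ∈ laurentBasic K := by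
  obtain ⟨Us, hUs, ⟨M, hM⟩, rfl⟩ := hU
  obtain ⟨Vs, hVs, ⟨N, hN⟩, rfl⟩ := hV
  refine ⟨fun i => Us i ∩ Vs i, fun i => ⟨(hUs i).1.inter (hVs i).1, (hUs i).2, (hVs i).2⟩,
    ⟨max M N, fun i hi => ?_⟩, ?_⟩
  · change Us i ∩ Vs i = univ
    rw [hM i (le_of_max_le_left hi), hN i (le_of_max_le_right hi), univ_inter]
  · ext f
    simp only [mem_inter_iff, mem_ofPred_eq, forall_and]

lemma zero_mem_of_mem_laurentBasic {U : Set (LaurentSeries K)} (hU : U ∈ laurentBasic K) :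
    (0 : LaurentSeries K) ∈ U := by
  obtain ⟨Us, hUs, -, rfl⟩ := hU
  exact fun i => (hUs i).2

lemma setOf_laurentSeminorm_le_mem_laurentBasic [IsUltrametricDist K] {q : ℕ}
    {n : ℤ → WithBot ℤ} {k : ℤ} (hk : ∀ i, k < i → n i = ⊥) {ε : ℝ} (hε : 0 < ε) :
    {f | laurentSeminorm K q n f ≤ ε} ∈ laurentBasic K := by
  refine ⟨fun i => {x | ‖x‖ * qpow q (n i) ≤ ε},
    fun i => ⟨isOpen_setOf_norm_mul_le (qpow_nonneg _) hε, by simp [hε.le]⟩,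
    ⟨k + 1, fun i hi => ?_⟩, ?_⟩
  · simp [hk i (by omega), hε.le]
  · ext f
    exact laurentSeminorm_le_iff hk

lemma exists_setOf_laurentSeminorm_le_one_subset {q : ℕ} (hq : 1 < q)
    {U : Set (LaurentSeries K)} (hU : U ∈ laurentBasic K) :
    ∃ n : ℤ → WithBot ℤ, (∃ k : ℤ, ∀ i, k < i → n i = ⊥) ∧
      {f | laurentSeminorm K q n f ≤ 1} ⊆ U := by
  obtain ⟨Us, hUs, ⟨N, hN⟩, rfl⟩ := hU
  have hball : ∀ i, ∃ m : WithBot ℤ, {x : K | ‖x‖ * qpow q m ≤ 1} ⊆ Us i ∧ (N ≤ i → m = ⊥) := by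
    intro i
    by_cases hi : N ≤ i
    · exact ⟨⊥, by simp [hN i hi], fun _ => rfl⟩
    · obtain ⟨m, hm⟩ := exists_setOf_norm_mul_zpow_le_subset hq
        ((hUs i).1.mem_nhds (hUs i).2)
      exact ⟨m, hm, fun h => absurd h hi⟩
  choose n hnU hnbot using hball
  have hk : ∀ i, N - 1 < i → n i = ⊥ := fun i hi => hnbot i (by omega)
  exact ⟨n, ⟨N - 1, hk⟩, fun f hf i => hnU i ((laurentSeminorm_le_iff hk).1 hf i)⟩

lemma hasBasis_nhds_zero_laurentTop [IsUltrametricDist K] :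
    (@nhds _ (laurentTop K) 0).HasBasis (· ∈ laurentBasic K) id := by
  refine hasBasis_nhds_zero_addTopologyOf ⟨_, univ_mem_laurentBasic⟩
    (fun U hU V hV => inter_mem_laurentBasic hU hV) (fun U hU => zero_mem_of_mem_laurentBasic hU)
    fun U hU => ?_
  -- any `q > 1` gives an additive ball inside `U`
  obtain ⟨n, ⟨k, hk⟩, hnU⟩ := exists_setOf_laurentSeminorm_le_one_subset (q := 2) one_lt_two hU
  refine ⟨_, setOf_laurentSeminorm_le_mem_laurentBasic (q := 2) hk one_pos, ?_⟩
  rintro _ ⟨f, hf, g, hg, rfl⟩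
  exact hnU ((laurentSeminorm_add_le hk f g).trans (max_le hf hg))

end HigherTopology

/-- For any sequence `(n_i) ⊆ ℤ ∪ {-∞}` with `n_i = -∞` for all `i > k`,
the map `‖Σ x_i t^i‖ = max_{i≤k} ‖x_i‖ q^{n_i}` is a seminorm on `K((t))`, equal to the gauge
seminorm of the lattice `Σ 𝔭^{n_i} t^i`; and the higher topology is exactly the locally convex
topology defined by the family of all such seminorms. -/
theorem statement1 (q : ℕ) (hK : IsCharZeroLocalField K q) :
    (∀ n : ℤ → WithBot ℤ, (∃ k : ℤ, ∀ i : ℤ, k < i → n i = ⊥) →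
      IsSeminorm K (laurentSeminorm K q n) ∧
      ∀ f : LaurentSeries K,
        laurentSeminorm K q n f = gaugeSeminorm K (laurentLambda K q n) f) ∧
    (∀ S : Set (LaurentSeries K),
      S ∈ @nhds _ (laurentTop K) 0 ↔
        ∃ (m : ℕ) (ns : Fin m → ℤ → WithBot ℤ) (ε : ℝ), 0 < ε ∧
          (∀ j, ∃ k : ℤ, ∀ i : ℤ, k < i → ns j i = ⊥) ∧
          {f : LaurentSeries K | ∀ j, laurentSeminorm K q (ns j) f ≤ ε} ⊆ S) := by
  have : IsUltrametricDist K :=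
    IsUltrametricDist.isUltrametricDist_of_forall_norm_add_le_max_norm hK.nonarch
  have hq : 0 < q := zero_lt_one.trans hK.one_lt_q
  obtain ⟨π, hπ⟩ := hK.exists_uniformizer
  have hbasis := hasBasis_nhds_zero_laurentTop (K := K)
  refine ⟨fun n ⟨k, hk⟩ => ⟨⟨laurentSeminorm_smul hk, laurentSeminorm_add_le hk⟩,
    laurentSeminorm_eq_gaugeSeminorm hq hπ hk⟩, fun S => ⟨fun hS => ?_, ?_⟩⟩
  · obtain ⟨U, hU, hUS⟩ := hbasis.mem_iff.1 hS
    obtain ⟨n, hn, hnU⟩ := exists_setOf_laurentSeminorm_le_one_subset hK.one_lt_q hU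
    exact ⟨1, fun _ => n, 1, one_pos, fun _ => hn, fun f hf => hUS (hnU (hf 0))⟩
  · rintro ⟨m, ns, ε, hε, hns, hsub⟩
    choose k hk using hns
    have hball : ∀ j, {f | laurentSeminorm K q (ns j) f ≤ ε} ∈ @nhds _ (laurentTop K) 0 :=
      fun j => hbasis.mem_iff.2 ⟨_, setOf_laurentSeminorm_le_mem_laurentBasic (hk j) hε, subset_rfl⟩
    exact mem_of_superset (iInter_mem.2 hball) fun f hf => hsub fun j => mem_iInter.1 hf j

end TwoDimLF
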